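/- Let p > 1, ℓ ∈ (0,∞), and k ∈ K_ℓ with K(s) = ∫₀ˢ k(θ) dθ. Let f ∈ C¹([0,∞)) satisfy f(0) = 0, f'(u) > 0 for u > 0, and f ∈ RV_ρ with ρ > max{1, p−1, p−1−(p−2)/ℓ}. Set r = (ρ+1)/(ρ+1−p), F(t) = ∫₀ᵗ f(s) ds, p' = p/(p−1), and let φ : (0,∞) → (0,∞) be defined by ∫_{φ(t)}^∞ ds/(p'F(s))^{1/p} = t. Then the composition s ↦ k(K⁻¹(φ⁻¹(s))) belongs to RV_{(1−ℓ)/(1−r)}, and the function f*(s) := (k(K⁻¹(φ⁻¹(s))))^p · f(s) belongs to RV_q, where q = p(1−ℓ)/(1−r) + ρ = ρ − (ρ−p+1)(1−ℓ). -/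

import Mathlib

/-!
Karamata's theorem gives `F ∈ RV_{ρ+1}`, hence `(p' F)^{-1/p} ∈ RV_{-(ρ+1)/p}`, and L'Hôpital's
rule shows that its tail integral `φ⁻¹` lies in `RV_{1-(ρ+1)/p} = RV_{1/(1-r)}`.
The condition `(K/k)' → ℓ` says that `d log k / d log K = K k' / k² → 1 - ℓ` at `0⁺`, so
`log k(y) - log k(x) = (1 - ℓ + o(1)) (log K(y) - log K(x))` as `x, y → 0⁺`. Taking
`K(x) = φ⁻¹(s)` and `K(y) = φ⁻¹(ξ s)` turns the regular variation of `φ⁻¹` into that of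
`k ∘ K⁻¹ ∘ φ⁻¹`, with index `(1 - ℓ)/(1 - r)`; `f*` is then a product of regularly varying functions.
-/

open Filter MeasureTheory Set Topology

noncomputable section

/-- `f` is regularly varying at infinity of index `ρ`. -/
def IsRV (f : ℝ → ℝ) (ρ : ℝ) : Prop :=
  ∀ ξ : ℝ, 0 < ξ → Tendsto (fun u => f (ξ * u) / f u) atTop (𝓝 (ξ ^ ρ))

/-- `k ∈ K_ℓ`: `k` is a positive monotonic function in `C¹((0,μ)) ∩ L¹((0,μ))`
such that `(K/k)'(s) → ℓ` as `s → 0⁺`, where `K(s) = ∫₀ˢ k(θ) dθ`. -/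
def memK (ℓ μ : ℝ) (k : ℝ → ℝ) : Prop :=
  (∀ s ∈ Ioo (0:ℝ) μ, 0 < k s) ∧
  (MonotoneOn k (Ioo (0:ℝ) μ) ∨ AntitoneOn k (Ioo (0:ℝ) μ)) ∧
  ContDiffOn ℝ 1 k (Ioo (0:ℝ) μ) ∧
  IntegrableOn k (Ioo (0:ℝ) μ) ∧
  Tendsto (deriv fun s => (∫ θ in (0:ℝ)..s, k θ) / k s) (𝓝[>] (0:ℝ)) (𝓝 ℓ)

namespace IsRV

variable {f g : ℝ → ℝ} {ρ σ : ℝ}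

theorem congr' (hf : IsRV f ρ) (hfg : f =ᶠ[atTop] g) : IsRV g ρ := by
  intro ξ hξ
  refine (hf ξ hξ).congr' ?_
  filter_upwards [hfg, (tendsto_id.const_mul_atTop hξ).eventually hfg]
    with u hu (hξu : f (ξ * u) = g (ξ * u))
  rw [hu, hξu]

theorem mul (hf : IsRV f ρ) (hg : IsRV g σ) : IsRV (fun u => f u * g u) (ρ + σ) := by
  intro ξ hξ
  rw [Real.rpow_add hξ]
  exact ((hf ξ hξ).mul (hg ξ hξ)).congr fun u => div_mul_div_comm _ _ _ _

theorem const_mul (hf : IsRV f ρ) {c : ℝ} (hc : c ≠ 0) : IsRV (fun u => c * f u) ρ := by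
  intro ξ hξ
  simpa only [mul_div_mul_left _ _ hc] using hf ξ hξ

theorem rpow (hf : IsRV f ρ) (hf0 : ∀ᶠ u in atTop, 0 ≤ f u) (a : ℝ) :
    IsRV (fun u => f u ^ a) (ρ * a) := by
  intro ξ hξ
  rw [Real.rpow_mul hξ.le]
  refine ((hf ξ hξ).rpow_const (Or.inl (Real.rpow_pos_of_pos hξ ρ).ne')).congr' ?_
  filter_upwards [hf0, (tendsto_id.const_mul_atTop hξ).eventually hf0] with u hu hξu
  exact Real.div_rpow hξu hu a

end IsRV

theorem isLittleO_integral_of_isLittleO {g h : ℝ → ℝ} {a : ℝ}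
    (hg : ∀ u, a ≤ u → IntervalIntegrable g volume a u)
    (hh : ∀ u, a ≤ u → IntervalIntegrable h volume a u) (hh0 : ∀ᶠ v in atTop, 0 ≤ h v)
    (hH : Tendsto (fun u => ∫ v in a..u, h v) atTop atTop) (hgh : g =o[atTop] h) :
    (fun u => ∫ v in a..u, g v) =o[atTop] (fun u => ∫ v in a..u, h v) := by
  rw [Asymptotics.isLittleO_iff]
  intro c hc
  obtain ⟨V, hV⟩ := eventually_atTop.1
    ((hgh.def (half_pos hc)).and (hh0.and (eventually_ge_atTop a)))
  set H := fun u => ∫ v in a..u, h v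
  have hV' : a ≤ V := (hV V le_rfl).2.2
  have htail : ∀ u, V ≤ u → |∫ v in V..u, g v| ≤ c / 2 * (H u - H V) := fun u hu => by
    have hHu : H u - H V = ∫ v in V..u, h v :=
      intervalIntegral.integral_interval_sub_left (hh u (hV'.trans hu)) (hh V hV')
    rw [hHu, ← intervalIntegral.integral_const_mul, ← Real.norm_eq_abs]
    refine intervalIntegral.norm_integral_le_of_norm_le (f := g) hu (ae_of_all _ fun v hv => ?_)
      (((hh V hV').symm.trans (hh u (hV'.trans hu))).const_mul _)
    obtain ⟨hgv, hhv, -⟩ := hV v hv.1.le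
    rwa [Real.norm_of_nonneg hhv] at hgv
  set C := |∫ v in a..V, g v| + c / 2 * |H V| with hC
  filter_upwards [eventually_ge_atTop V, hH.eventually_ge_atTop (2 / c * C)] with u hu hHu
  have hsplit : ∫ v in a..u, g v = (∫ v in a..V, g v) + ∫ v in V..u, g v :=
    (intervalIntegral.integral_add_adjacent_intervals (hg V hV')
      ((hg V hV').symm.trans (hg u (hV'.trans hu)))).symm
  have hCH : C ≤ c / 2 * H u :=
    calc C = c / 2 * (2 / c * C) := by field_simp
      _ ≤ c / 2 * H u := by gcongr
  have hHu0 : 0 ≤ H u := le_trans (by positivity) hHu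
  rw [Real.norm_eq_abs, Real.norm_eq_abs, abs_of_nonneg hHu0, hsplit]
  calc |(∫ v in a..V, g v) + ∫ v in V..u, g v|
      ≤ |∫ v in a..V, g v| + c / 2 * (H u - H V) :=
        (abs_add_le _ _).trans (add_le_add le_rfl (htail u hu))
    _ ≤ C + c / 2 * H u := by
      have := mul_le_mul_of_nonneg_left (neg_abs_le (H V)) (half_pos hc).le
      linarith
    _ ≤ c * H u := by linarith

-- Karamata's theorem.
theorem IsRV.integral {f : ℝ → ℝ} {ρ : ℝ} (hf : IsRV f ρ)
    (hfi : ∀ u, 0 ≤ u → IntervalIntegrable f volume 0 u) (hpos : ∀ᶠ u in atTop, 0 < f u)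
    (hF : Tendsto (fun u => ∫ v in (0:ℝ)..u, f v) atTop atTop) :
    IsRV (fun u => ∫ v in (0:ℝ)..u, f v) (ρ + 1) := by
  intro ξ hξ
  set F := fun u => ∫ v in (0:ℝ)..u, f v
  have hfξi : ∀ u, 0 ≤ u → IntervalIntegrable (fun v => f (ξ * v)) volume 0 u := fun u hu => by
    simpa [mul_div_cancel_left₀ u hξ.ne'] using
      (hfi (ξ * u) (by positivity)).comp_mul_left (c := ξ)
  have ho : (fun v => f (ξ * v) - ξ ^ ρ * f v) =o[atTop] f := by
    rw [Asymptotics.isLittleO_iff_tendsto' (hpos.mono fun v hv h0 => absurd h0 hv.ne')]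
    refine (sub_self (ξ ^ ρ) ▸ (hf ξ hξ).sub_const (ξ ^ ρ)).congr' ?_
    filter_upwards [hpos] with v hv
    rw [sub_div, mul_div_assoc, div_self hv.ne', mul_one]
  have hint := (isLittleO_integral_of_isLittleO
    (fun u hu => (hfξi u hu).sub ((hfi u hu).const_mul _)) hfi (hpos.mono fun _ hv => hv.le) hF
    ho).tendsto_div_nhds_zero
  have hlim : Tendsto (fun u => ξ * ((∫ v in (0:ℝ)..u, f (ξ * v) - ξ ^ ρ * f v) / F u + ξ ^ ρ))
      atTop (𝓝 (ξ ^ (ρ + 1))) := by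
    rw [Real.rpow_add_one hξ.ne', mul_comm]
    simpa using (hint.add_const (ξ ^ ρ)).const_mul ξ
  refine hlim.congr' ?_
  filter_upwards [hF.eventually_gt_atTop 0, eventually_ge_atTop 0] with u hFu hu
  rw [intervalIntegral.integral_sub (hfξi u hu) ((hfi u hu).const_mul _),
    intervalIntegral.integral_const_mul, intervalIntegral.integral_comp_mul_left _ hξ.ne',
    mul_zero, smul_eq_mul]
  field_simp
  ring

theorem tendsto_integral_Ioi_atTop {g : ℝ → ℝ} {a : ℝ} (hgi : IntegrableOn g (Ioi a)) :
    Tendsto (fun s => ∫ y in Ioi s, g y) atTop (𝓝 0) := by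
  refine (sub_self (∫ y in Ioi a, g y) ▸
    (intervalIntegral_tendsto_integral_Ioi a hgi tendsto_id).const_sub _).congr' ?_
  filter_upwards [eventually_ge_atTop a] with s hs
  rw [id, ← intervalIntegral.integral_Ioi_sub_Ioi hgi hs, sub_sub_cancel]

theorem IsRV.integral_Ioi {g : ℝ → ℝ} {α a : ℝ} (hg : IsRV g α) (hgc : ContinuousOn g (Ioi a))
    (hgi : IntegrableOn g (Ioi a)) (hg0 : ∀ᶠ x in atTop, g x ≠ 0) :
    IsRV (fun s => ∫ y in Ioi s, g y) (α + 1) := by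
  set G := fun s => ∫ y in Ioi s, g y
  have hGsub : ∀ s, a ≤ s → G s = G a - ∫ y in a..s, g y := fun s hs => by
    rw [← intervalIntegral.integral_Ioi_sub_Ioi hgi hs, sub_sub_cancel]
  have hGd : ∀ s, a < s → HasDerivAt G (-g s) s := fun s hs => by
    have hFTC : HasDerivAt (fun s => ∫ y in a..s, g y) (g s) s :=
      intervalIntegral.integral_hasDerivAt_right
        ((intervalIntegrable_iff_integrableOn_Ioc_of_le hs.le).2
          (hgi.mono_set Ioc_subset_Ioi_self))
        (hgc.stronglyMeasurableAtFilter isOpen_Ioi s hs) (hgc.continuousAt (Ioi_mem_nhds hs))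
    refine (hFTC.const_sub (G a)).congr_of_eventuallyEq ?_
    filter_upwards [eventually_gt_nhds hs] with t ht using hGsub t ht.le
  intro ξ hξ
  have hξs : Tendsto (fun s => ξ * s) atTop atTop := tendsto_id.const_mul_atTop hξ
  refine HasDerivAt.lhopital_zero_atTop (f' := fun s => -g (ξ * s) * ξ) (g' := fun s => -g s)
    ?_ ?_ ?_ ((tendsto_integral_Ioi_atTop hgi).comp hξs) (tendsto_integral_Ioi_atTop hgi) ?_
  · filter_upwards [hξs.eventually (eventually_gt_atTop a)] with s hs
    exact (hGd _ hs).comp s ((hasDerivAt_id s).const_mul ξ |>.congr_deriv (mul_one ξ))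
  · filter_upwards [eventually_gt_atTop a] with s hs using hGd s hs
  · filter_upwards [hg0] with s hs using neg_ne_zero.2 hs
  · rw [Real.rpow_add_one hξ.ne']
    refine ((hg ξ hξ).mul_const ξ).congr fun s => ?_
    rw [neg_mul, neg_div_neg_eq, mul_div_right_comm]

theorem abs_sub_le_sub_of_abs_deriv_le {M L M' L' : ℝ → ℝ} {a b : ℝ} (hab : a ≤ b)
    (hM : ∀ x ∈ Icc a b, HasDerivAt M (M' x) x) (hL : ∀ x ∈ Icc a b, HasDerivAt L (L' x) x)
    (hML : ∀ x ∈ Icc a b, |M' x| ≤ L' x) : |M b - M a| ≤ L b - L a := by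
  refine image_norm_le_of_norm_deriv_right_le_deriv_boundary' (f := fun x => M x - M a)
    (B := fun x => L x - L a)
    (fun x hx => ((hM x hx).continuousAt.sub continuousAt_const).continuousWithinAt)
    (fun x hx => ((hM x (Ico_subset_Icc_self hx)).sub_const _).hasDerivWithinAt) (by simp)
    (fun x hx => ((hL x hx).continuousAt.sub continuousAt_const).continuousWithinAt)
    (fun x hx => ((hL x (Ico_subset_Icc_self hx)).sub_const _).hasDerivWithinAt)
    (fun x hx => hML x (Ico_subset_Icc_self hx)) (right_mem_Icc.2 hab)

theorem tendsto_nhdsGT_of_tendsto_comp {ι : Type*} {l : Filter ι} {K : ℝ → ℝ} {x : ι → ℝ}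
    {μ : ℝ} (hμ : 0 < μ) (hKmono : MonotoneOn K (Ioo 0 μ)) (hKpos : ∀ s ∈ Ioo 0 μ, 0 < K s)
    (hx : ∀ᶠ i in l, x i ∈ Ioo 0 μ) (hKx : Tendsto (fun i => K (x i)) l (𝓝 0)) :
    Tendsto x l (𝓝[>] 0) := by
  refine tendsto_nhdsWithin_iff.2 ⟨tendsto_order.2
    ⟨fun b hb => hx.mono fun i hi => hb.trans hi.1, fun b hb => ?_⟩, hx.mono fun i hi => hi.1⟩
  have hδ : min b μ / 2 ∈ Ioo 0 μ := ⟨by positivity, by linarith [min_le_right b μ]⟩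
  filter_upwards [hx, hKx.eventually (gt_mem_nhds (hKpos _ hδ))] with i hi hKi
  by_contra! hbx
  exact (hKmono hδ hi (by linarith [min_le_left b μ])).not_gt hKi

section DerivRatio

variable {k K : ℝ → ℝ} {ℓ μ : ℝ}

theorem tendsto_mul_deriv_div_sq (hμ : 0 < μ) (hk : ∀ s ∈ Ioo 0 μ, 0 < k s)
    (hKk : ∀ s ∈ Ioo 0 μ, HasDerivAt K (k s) s) (hkd : DifferentiableOn ℝ k (Ioo 0 μ))
    (hℓ : Tendsto (deriv fun s => K s / k s) (𝓝[>] 0) (𝓝 ℓ)) :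
    Tendsto (fun s => K s * deriv k s / k s ^ 2) (𝓝[>] 0) (𝓝 (1 - ℓ)) := by
  refine (hℓ.const_sub 1).congr' ?_
  filter_upwards [Ioo_mem_nhdsGT hμ] with s hs
  have hd : HasDerivAt (fun s => K s / k s) _ s :=
    (hKk s hs).div (hkd.differentiableAt (isOpen_Ioo.mem_nhds hs)).hasDerivAt (hk s hs).ne'
  rw [hd.deriv]
  field_simp [(hk s hs).ne']
  ring

theorem isLittleO_log_sub_log (hμ : 0 < μ) (hk : ∀ s ∈ Ioo 0 μ, 0 < k s)
    (hK : ∀ s ∈ Ioo 0 μ, 0 < K s) (hKk : ∀ s ∈ Ioo 0 μ, HasDerivAt K (k s) s)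
    (hkd : DifferentiableOn ℝ k (Ioo 0 μ))
    (hℓ : Tendsto (deriv fun s => K s / k s) (𝓝[>] 0) (𝓝 ℓ)) :
    (fun p : ℝ × ℝ => (Real.log (k p.2) - (1 - ℓ) * Real.log (K p.2)) -
        (Real.log (k p.1) - (1 - ℓ) * Real.log (K p.1)))
      =o[𝓝[>] 0 ×ˢ 𝓝[>] 0] fun p => Real.log (K p.2) - Real.log (K p.1) := by
  rw [Asymptotics.isLittleO_iff]
  intro ε hε
  obtain ⟨δ, hδ, hδsub⟩ := mem_nhdsGT_iff_exists_Ioo_subset.1 (inter_mem (Ioo_mem_nhdsGT hμ)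
    ((tendsto_mul_deriv_div_sq hμ hk hKk hkd hℓ).eventually (Metric.closedBall_mem_nhds _ hε)))
  -- On `(0, δ)`, `M = log k - (1 - ℓ) log K` has `M' = (log K)' (K k' / k² - (1 - ℓ))`,
  -- so `|M'| ≤ ε (log K)'`.
  have key : ∀ a ∈ Ioo 0 δ, ∀ b ∈ Ioo 0 δ, a ≤ b →
      |(Real.log (k b) - (1 - ℓ) * Real.log (K b)) -
          (Real.log (k a) - (1 - ℓ) * Real.log (K a))|
        ≤ ε * (Real.log (K b) - Real.log (K a)) := by
    intro a ha b hb hab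
    rw [mul_sub]
    refine abs_sub_le_sub_of_abs_deriv_le hab
      (M := fun s => Real.log (k s) - (1 - ℓ) * Real.log (K s))
      (L := fun s => ε * Real.log (K s))
      (M' := fun s => deriv k s / k s - (1 - ℓ) * (k s / K s)) (L' := fun s => ε * (k s / K s))
      (fun s hs => ?_) (fun s hs => ?_) (fun s hs => ?_)
    all_goals obtain ⟨hsμ, hsη⟩ := hδsub (Icc_subset_Ioo ha.1 hb.2 hs)
    · exact ((hkd.differentiableAt (isOpen_Ioo.mem_nhds hsμ)).hasDerivAt.log (hk s hsμ).ne').sub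
        (((hKk s hsμ).log (hK s hsμ).ne').const_mul _)
    · exact ((hKk s hsμ).log (hK s hsμ).ne').const_mul ε
    · have hkK := div_pos (hk s hsμ) (hK s hsμ)
      have : deriv k s / k s - (1 - ℓ) * (k s / K s)
          = k s / K s * (K s * deriv k s / k s ^ 2 - (1 - ℓ)) := by
        field_simp [(hk s hsμ).ne', (hK s hsμ).ne']
      rw [this, abs_mul, abs_of_pos hkK, mul_comm ε]
      exact mul_le_mul_of_nonneg_left (Real.dist_eq _ _ ▸ hsη) hkK.le
  filter_upwards [prod_mem_prod (Ioo_mem_nhdsGT hδ) (Ioo_mem_nhdsGT hδ)] with ⟨a, b⟩ ⟨ha, hb⟩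
  simp only [Real.norm_eq_abs]
  rcases le_total a b with hab | hba
  · exact (key a ha b hb hab).trans (mul_le_mul_of_nonneg_left (le_abs_self _) hε.le)
  · rw [abs_sub_comm, abs_sub_comm (Real.log (K b))]
    exact (key b hb a ha hba).trans (mul_le_mul_of_nonneg_left (le_abs_self _) hε.le)

theorem tendsto_deriv_div_of_tendsto_div (hμ : 0 < μ) (hk : ∀ s ∈ Ioo 0 μ, 0 < k s)
    (hK : ∀ s ∈ Ioo 0 μ, 0 < K s) (hKk : ∀ s ∈ Ioo 0 μ, HasDerivAt K (k s) s)
    (hkd : DifferentiableOn ℝ k (Ioo 0 μ))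
    (hℓ : Tendsto (deriv fun s => K s / k s) (𝓝[>] 0) (𝓝 ℓ))
    {ι : Type*} {l : Filter ι} {x y : ι → ℝ} (hx : Tendsto x l (𝓝[>] 0))
    (hy : Tendsto y l (𝓝[>] 0)) {c : ℝ} (hc : 0 < c)
    (hxy : Tendsto (fun i => K (y i) / K (x i)) l (𝓝 c)) :
    Tendsto (fun i => k (y i) / k (x i)) l (𝓝 (c ^ (1 - ℓ))) := by
  have hxμ := hx (Ioo_mem_nhdsGT hμ)
  have hyμ := hy (Ioo_mem_nhdsGT hμ)
  have hlogK :
      Tendsto (fun i => Real.log (K (y i)) - Real.log (K (x i))) l (𝓝 (Real.log c)) := by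
    refine ((Real.continuousAt_log hc.ne').tendsto.comp hxy).congr' ?_
    filter_upwards [hxμ, hyμ] with i hxi hyi using Real.log_div (hK _ hyi).ne' (hK _ hxi).ne'
  have hM := (Asymptotics.isLittleO_one_iff ℝ).1 <|
    ((isLittleO_log_sub_log hμ hk hK hKk hkd hℓ).comp_tendsto (hx.prodMk hy)).trans_isBigO
      (hlogK.isBigO_one ℝ)
  have hlogk :
      Tendsto (fun i => Real.log (k (y i) / k (x i))) l (𝓝 ((1 - ℓ) * Real.log c)) := by
    refine (zero_add ((1 - ℓ) * Real.log c) ▸ hM.add (hlogK.const_mul (1 - ℓ))).congr' ?_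
    filter_upwards [hxμ, hyμ] with i hxi hyi
    rw [Real.log_div (hk _ hyi).ne' (hk _ hxi).ne']
    simp only [Function.comp_apply]
    ring
  rw [Real.rpow_def_of_pos hc, mul_comm]
  refine ((Real.continuous_exp.tendsto _).comp hlogk).congr' ?_
  filter_upwards [hxμ, hyμ] with i hxi hyi
  exact Real.exp_log (div_pos (hk _ hyi) (hk _ hxi))

theorem IsRV.deriv_comp_of_comp_eq {u x : ℝ → ℝ} {β : ℝ} (hu : IsRV u β)
    (hu0 : Tendsto u atTop (𝓝 0)) (hμ : 0 < μ) (hk : ∀ s ∈ Ioo 0 μ, 0 < k s)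
    (hK : ∀ s ∈ Ioo 0 μ, 0 < K s) (hKk : ∀ s ∈ Ioo 0 μ, HasDerivAt K (k s) s)
    (hkd : DifferentiableOn ℝ k (Ioo 0 μ))
    (hℓ : Tendsto (deriv fun s => K s / k s) (𝓝[>] 0) (𝓝 ℓ))
    (hx : ∀ᶠ s in atTop, x s ∈ Ioo 0 μ ∧ K (x s) = u s) :
    IsRV (fun s => k (x s)) (β * (1 - ℓ)) := by
  have hKmono : MonotoneOn K (Ioo 0 μ) :=
    (strictMonoOn_of_deriv_pos (convex_Ioo 0 μ)
      (fun s hs => (hKk s hs).continuousAt.continuousWithinAt) fun s hs => by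
        rw [interior_Ioo] at hs
        exact (hKk s hs).deriv ▸ hk s hs).monotoneOn
  have hx0 : Tendsto x atTop (𝓝[>] 0) :=
    tendsto_nhdsGT_of_tendsto_comp hμ hKmono hK (hx.mono fun s hs => hs.1)
      (hu0.congr' (hx.mono fun s hs => hs.2.symm))
  intro ξ hξ
  have hξs : Tendsto (fun s => ξ * s) atTop atTop := tendsto_id.const_mul_atTop hξ
  rw [Real.rpow_mul hξ.le]
  refine tendsto_deriv_div_of_tendsto_div hμ hk hK hKk hkd hℓ hx0 (hx0.comp hξs)
    (Real.rpow_pos_of_pos hξ β) ((hu ξ hξ).congr' ?_)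
  filter_upwards [hx, hξs.eventually hx] with s hs hξs
  simp only [Function.comp_apply, hs.2, hξs.2]

end DerivRatio

theorem tendsto_integral_atTop_of_monotoneOn {f : ℝ → ℝ} (hf : MonotoneOn f (Ici 0)) {a : ℝ}
    (ha : 0 ≤ a) (hfa : 0 < f a) : Tendsto (fun u => ∫ v in (0:ℝ)..u, f v) atTop atTop := by
  have hfi : ∀ b c, 0 ≤ b → 0 ≤ c → IntervalIntegrable f volume b c := fun b c hb hc =>
    (hf.mono fun x hx => le_trans (le_min hb hc) hx.1).intervalIntegrable
  refine tendsto_atTop_mono' _ ?_ (tendsto_atTop_add_const_left _ (∫ v in (0:ℝ)..a, f v)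
    ((tendsto_atTop_add_const_right _ (-a) tendsto_id).atTop_mul_const hfa))
  filter_upwards [eventually_ge_atTop a] with u hu
  have hlin : ∫ _ in a..u, f a ≤ ∫ v in a..u, f v :=
    intervalIntegral.integral_mono_on hu intervalIntegrable_const (hfi a u ha (ha.trans hu))
      fun x hx => hf ha (ha.trans hx.1) hx.1
  rw [intervalIntegral.integral_const, smul_eq_mul] at hlin
  rw [← intervalIntegral.integral_add_adjacent_intervals (hfi 0 a le_rfl ha)
    (hfi a u ha (ha.trans hu))]
  simp only [id]
  linarith

theorem IsRV.integral_Ioi_rpow_primitive {f F : ℝ → ℝ} {ρ c a : ℝ} (hf : IsRV f ρ)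
    (hfc : ContinuousOn f (Ici 0)) (hfmono : MonotoneOn f (Ici 0))
    (hfpos : ∀ u, 0 < u → 0 < f u) (hF : ∀ t, F t = ∫ s in (0:ℝ)..t, f s) (hc : 0 < c)
    (hint : IntegrableOn (fun y => (c * F y) ^ a) (Ioi 1)) :
    IsRV (fun s => ∫ y in Ioi s, (c * F y) ^ a) ((ρ + 1) * a + 1) := by
  have hfi : ∀ u, 0 ≤ u → IntervalIntegrable f volume 0 u := fun u hu =>
    (hfc.mono fun x hx => (uIcc_of_le hu ▸ hx).1).intervalIntegrable
  have hFpos : ∀ y, 0 < y → 0 < c * F y := fun y hy => mul_pos hc <| (hF y).symm ▸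
    intervalIntegral.intervalIntegral_pos_of_pos_on (hfi y hy.le) (fun x hx => hfpos x hx.1) hy
  have hFRV : IsRV F (ρ + 1) := funext hF ▸ hf.integral hfi ((eventually_gt_atTop 0).mono hfpos)
    (tendsto_integral_atTop_of_monotoneOn hfmono zero_le_one (hfpos 1 one_pos))
  have hFc : ∀ y, 0 < y → ContinuousAt F y := fun y hy =>
    funext hF ▸ (intervalIntegral.integral_hasDerivAt_right (hfi y hy.le)
      ((hfc.mono Ioi_subset_Ici_self).stronglyMeasurableAtFilter isOpen_Ioi y hy)
      (hfc.continuousAt (Ici_mem_nhds hy))).continuousAt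
  refine ((hFRV.const_mul hc.ne').rpow
    ((eventually_gt_atTop 0).mono fun y hy => (hFpos y hy).le) a).integral_Ioi (fun y hy => ?_) hint
    ((eventually_gt_atTop 0).mono fun y hy => (Real.rpow_pos_of_pos (hFpos y hy) a).ne')
  have hy0 : (0:ℝ) < y := one_pos.trans hy
  exact ((continuousAt_const.mul (hFc y hy0)).rpow_const
    (Or.inl (hFpos y hy0).ne')).continuousWithinAt

theorem intervalIntegrable_of_integrableOn_Ioo {k : ℝ → ℝ} {μ s : ℝ}
    (hi : IntegrableOn k (Ioo 0 μ)) (hs : s ∈ Ioo 0 μ) : IntervalIntegrable k volume 0 s :=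
  (intervalIntegrable_iff_integrableOn_Ioc_of_le hs.1.le).2
    (hi.mono_set (Ioc_subset_Ioo_right hs.2))

theorem integral_pos_of_integrableOn_Ioo {k : ℝ → ℝ} {μ s : ℝ} (hk : ∀ s ∈ Ioo 0 μ, 0 < k s)
    (hi : IntegrableOn k (Ioo 0 μ)) (hs : s ∈ Ioo 0 μ) : 0 < ∫ θ in (0:ℝ)..s, k θ :=
  intervalIntegral.intervalIntegral_pos_of_pos_on (intervalIntegrable_of_integrableOn_Ioo hi hs)
    (fun x hx => hk x ⟨hx.1, hx.2.trans hs.2⟩) hs.1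

theorem hasDerivAt_integral_of_continuousOn_Ioo {k : ℝ → ℝ} {μ s : ℝ}
    (hc : ContinuousOn k (Ioo 0 μ)) (hi : IntegrableOn k (Ioo 0 μ)) (hs : s ∈ Ioo 0 μ) :
    HasDerivAt (fun t => ∫ θ in (0:ℝ)..t, k θ) (k s) s :=
  intervalIntegral.integral_hasDerivAt_right (intervalIntegrable_of_integrableOn_Ioo hi hs)
    (hc.stronglyMeasurableAtFilter isOpen_Ioo s hs) (hc.continuousAt (isOpen_Ioo.mem_nhds hs))

theorem index_identities {p ρ ℓ : ℝ} (hp : p ≠ 0) (hρp : ρ + 1 - p ≠ 0) :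
    ((ρ + 1) * -(1 / p) + 1) * (1 - ℓ) = (1 - ℓ) / (1 - (ρ + 1) / (ρ + 1 - p)) ∧
      (1 - ℓ) / (1 - (ρ + 1) / (ρ + 1 - p)) * p + ρ = ρ - (ρ - p + 1) * (1 - ℓ) := by
  have hr : 1 / (1 - (ρ + 1) / (ρ + 1 - p)) = 1 - (ρ + 1) / p := by
    rw [one_sub_div hρp, one_div_div, sub_sub_cancel_left, div_neg, one_sub_div hp]
    ring
  rw [div_eq_mul_one_div (1 - ℓ), hr]
  constructor
  · ring
  · field_simp
    ring

theorem fstar_regular_variation_general (p ℓ μ ρ : ℝ) (hp : 1 < p) (hμ : 0 < μ)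
    (k : ℝ → ℝ) (hk : memK ℓ μ k)
    (f : ℝ → ℝ) (hfC : ContDiffOn ℝ 1 f (Ici (0:ℝ))) (hf0 : f 0 = 0)
    (hf' : ∀ u : ℝ, 0 < u → 0 < deriv f u)
    (hRV : IsRV f ρ) (hρ : max 1 (max (p - 1) (p - 1 - (p - 2) / ℓ)) < ρ)
    (r q : ℝ) (hr : r = (ρ + 1) / (ρ + 1 - p)) (hq : q = ρ - (ρ - p + 1) * (1 - ℓ))
    (F : ℝ → ℝ) (hF : ∀ t, F t = ∫ s in (0:ℝ)..t, f s)
    (φ : ℝ → ℝ)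
    (hφ : ∀ t : ℝ, 0 < t →
      (∫ s in Ioi (φ t), ((p / (p - 1)) * F s) ^ (-(1 / p))) = t)
    (Kinv φinv : ℝ → ℝ)
    (hφinv' : ∀ s : ℝ, 0 < s → 0 < φinv s ∧ φ (φinv s) = s)
    (hrange : ∀ᶠ s in atTop, Kinv (φinv s) ∈ Ioo (0:ℝ) μ ∧
      (∫ θ in (0:ℝ)..(Kinv (φinv s)), k θ) = φinv s) :
    p * (1 - ℓ) / (1 - r) + ρ = q ∧
    IsRV (fun s => k (Kinv (φinv s))) ((1 - ℓ) / (1 - r)) ∧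
    IsRV (fun s => (k (Kinv (φinv s))) ^ p * f s) q := by
  obtain ⟨hkpos, -, hkC, hki, hkℓ⟩ := hk
  have hρp : p - 1 < ρ := (le_max_left _ _).trans_lt ((le_max_right _ _).trans_lt hρ)
  have hfmono : StrictMonoOn f (Ici 0) := strictMonoOn_of_deriv_pos (convex_Ici 0)
    hfC.continuousOn fun u hu => hf' u (by simpa using hu)
  have hφinv : ∀ s, 0 < s → φinv s = ∫ y in Ioi s, (p / (p - 1) * F y) ^ (-(1 / p)) :=
    fun s hs => by rw [← hφ _ (hφinv' s hs).1, (hφinv' s hs).2]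
  have hφinv_ev := (eventually_gt_atTop 0).mono fun s hs => (hφinv s hs).symm
  -- `φ⁻¹(1) > 0`, so the integral defining it is not the junk value of a non-integrable function.
  have hint : IntegrableOn (fun y => (p / (p - 1) * F y) ^ (-(1 / p))) (Ioi 1) := by
    by_contra h
    exact (hφinv' 1 one_pos).1.ne' (integral_undef h ▸ hφinv 1 one_pos)
  have hφinvRV : IsRV φinv ((ρ + 1) * -(1 / p) + 1) :=
    (hRV.integral_Ioi_rpow_primitive hfC.continuousOn hfmono.monotoneOn
      (fun u hu => hf0 ▸ hfmono self_mem_Ici hu.le hu) hF (div_pos (by linarith) (by linarith))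
      hint).congr' hφinv_ev
  have hkRV := hφinvRV.deriv_comp_of_comp_eq ((tendsto_integral_Ioi_atTop hint).congr' hφinv_ev)
    hμ hkpos (fun _ => integral_pos_of_integrableOn_Ioo hkpos hki)
    (fun _ => hasDerivAt_integral_of_continuousOn_Ioo hkC.continuousOn hki)
    (hkC.differentiableOn one_ne_zero) hkℓ hrange
  obtain ⟨hexp, hqe⟩ := hr ▸ hq ▸ index_identities (ℓ := ℓ) (by linarith) (by linarith)
  rw [hexp] at hkRV
  exact ⟨by rw [← hqe]; ring, hkRV,
    hqe ▸ (hkRV.rpow (hrange.mono fun s hs => (hkpos _ hs.1).le) p).mul hRV⟩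

/-- Let `k ∈ K_ℓ`, `f ∈ C¹([0,∞)) ∩ RV_ρ` with `f(0) = 0`, `f' > 0` on `(0,∞)`,
`ρ > max{1, p-1, p-1-(p-2)/ℓ}`, `r = (ρ+1)/(ρ+1-p)`, and let `φ` be defined by
`∫_{φ(t)}^∞ (p'F(s))^{-1/p} ds = t` with `F(t) = ∫₀ᵗ f` and `p' = p/(p-1)`.
Here `Kinv` and `φinv` are the inverse functions of `K(s) = ∫₀ˢ k` and `φ`.
Then `s ↦ k(K⁻¹(φ⁻¹(s))) ∈ RV_{(1-ℓ)/(1-r)}` and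
`f*(s) = (k(K⁻¹(φ⁻¹(s))))^p f(s) ∈ RV_q`, where
`q = p(1-ℓ)/(1-r) + ρ = ρ - (ρ-p+1)(1-ℓ)`. -/
theorem fstar_regular_variation (p ℓ μ ρ : ℝ) (hp : 1 < p) (hℓ : 0 < ℓ) (hμ : 0 < μ)
    (k : ℝ → ℝ) (hk : memK ℓ μ k)
    (f : ℝ → ℝ) (hfC : ContDiffOn ℝ 1 f (Ici (0:ℝ))) (hf0 : f 0 = 0)
    (hf' : ∀ u : ℝ, 0 < u → 0 < deriv f u)
    (hRV : IsRV f ρ) (hρ : max 1 (max (p - 1) (p - 1 - (p - 2) / ℓ)) < ρ)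
    (r q : ℝ) (hr : r = (ρ + 1) / (ρ + 1 - p)) (hq : q = ρ - (ρ - p + 1) * (1 - ℓ))
    (F : ℝ → ℝ) (hF : ∀ t, F t = ∫ s in (0:ℝ)..t, f s)
    (φ : ℝ → ℝ) (hφpos : ∀ t : ℝ, 0 < t → 0 < φ t)
    (hφ : ∀ t : ℝ, 0 < t →
      (∫ s in Ioi (φ t), ((p / (p - 1)) * F s) ^ (-(1 / p))) = t)
    (Kinv φinv : ℝ → ℝ)
    (hKinv : ∀ s ∈ Ioo (0:ℝ) μ, Kinv (∫ θ in (0:ℝ)..s, k θ) = s)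
    (hφinv : ∀ t : ℝ, 0 < t → φinv (φ t) = t)
    (hφinv' : ∀ s : ℝ, 0 < s → 0 < φinv s ∧ φ (φinv s) = s)
    (hrange : ∀ᶠ s in atTop, Kinv (φinv s) ∈ Ioo (0:ℝ) μ ∧
      (∫ θ in (0:ℝ)..(Kinv (φinv s)), k θ) = φinv s) :
    p * (1 - ℓ) / (1 - r) + ρ = q ∧
    IsRV (fun s => k (Kinv (φinv s))) ((1 - ℓ) / (1 - r)) ∧
    IsRV (fun s => (k (Kinv (φinv s))) ^ p * f s) q :=
  fstar_regular_variation_general p ℓ μ ρ hp hμ k hk f hfC hf0 hf' hRV hρ r q hr hq F hF φ hφ Kinv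
    φinv hφinv' hrange
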